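/- arXiv:math/0409223 — 5 statements merged into one kernel-verified Lean document; each statement's English description precedes it below -/
import Mathlib

section
/- Let n be an even positive integer. Then B_n + \sum_{p-1 \mid n} 1/p is an integer, where the sum runs over primes p with p-1 dividing n; consequently the denominator of B_n (in lowest terms) equals the product of all primes p with p-1 \mid n. -/
/-!
Integrality is Mathlib's `Bernoulli.vonStaudt_clausen` (Rado's proof via Faulhaber's formula).
Since `B_n` then differs from `-∑ 1/p` by an integer, it has the same denominator, and the
denominator of a sum of reciprocals of distinct primes is their product.
-/

open Finset

theorem Rat.den_sum_one_div_primes {P : Finset ℕ} (hP : ∀ p ∈ P, p.Prime) :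
    (∑ p ∈ P, (1 : ℚ) / p).den = ∏ p ∈ P, p := by
  have hden : ∀ p ∈ P, ((1 : ℚ) / p).den = p := fun p hp => by
    rw [one_div]
    exact Rat.inv_natCast_den_of_pos (hP p hp).pos
  refine Nat.dvd_antisymm ?_ (prod_primes_dvd _ (fun p hp => (hP p hp).prime) fun p hp => ?_)
  · rw [← prod_congr rfl hden]
    exact Rat.den_sum_dvd_prod_den P _
  · have hp' := (hP p hp).prime
    -- the other terms have denominators coprime to `p`, so `1 / p` must take its `p` from the sum
    have hrest : ¬p ∣ (∑ q ∈ P.erase p, (1 : ℚ) / q).den := by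
      intro h
      obtain ⟨q, hq, hpq⟩ := hp'.exists_mem_finset_dvd (h.trans (Rat.den_sum_dvd_prod_den _ _))
      rw [hden q (mem_of_mem_erase hq), Nat.prime_dvd_prime_iff_eq (hP p hp)
        (hP q (mem_of_mem_erase hq))] at hpq
      exact ne_of_mem_erase hq hpq.symm
    have hsplit : (1 : ℚ) / p = ∑ q ∈ P, (1 : ℚ) / q - ∑ q ∈ P.erase p, (1 : ℚ) / q := by
      rw [← add_sum_erase P _ hp, add_sub_cancel_right]
    have hsub := Rat.sub_den_dvd (∑ q ∈ P, (1 : ℚ) / q) (∑ q ∈ P.erase p, (1 : ℚ) / q)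
    rw [← hsplit, hden p hp] at hsub
    exact (hp'.dvd_or_dvd hsub).resolve_right hrest

theorem stmt_0_general (n : ℕ) (hne : Even n) :
    (∃ z : ℤ, bernoulli n +
        ∑ p ∈ (Finset.range (n + 2)).filter (fun p => p.Prime ∧ (p - 1) ∣ n),
          (1 : ℚ) / p = z) ∧
    (bernoulli n).den =
      ∏ p ∈ (Finset.range (n + 2)).filter (fun p => p.Prime ∧ (p - 1) ∣ n), p := by
  obtain ⟨k, rfl⟩ := even_iff_two_dvd.mp hne
  obtain ⟨z, hz⟩ := Bernoulli.vonStaudt_clausen k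
  refine ⟨⟨z, hz.symm⟩, ?_⟩
  rw [← Rat.den_sum_one_div_primes fun p hp => (mem_filter.mp hp).2.1,
    eq_sub_of_add_eq hz.symm, Rat.intCast_sub_den]

/-- Clausen–von Staudt: for even positive `n`, `B_n + ∑_{p-1 ∣ n} 1/p` is an
integer, and the denominator of `B_n` is the product of primes `p` with `p-1 ∣ n`. -/
theorem stmt_0 (n : ℕ) (hn : 0 < n) (hne : Even n) :
    (∃ z : ℤ, bernoulli n +
        ∑ p ∈ (Finset.range (n + 2)).filter (fun p => p.Prime ∧ (p - 1) ∣ n),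
          (1 : ℚ) / p = z) ∧
    (bernoulli n).den =
      ∏ p ∈ (Finset.range (n + 2)).filter (fun p => p.Prime ∧ (p - 1) ∣ n), p :=
  stmt_0_general n hne
end

section
/- Let n be an even positive integer and p a prime with p-1 \nmid n. Then B_n/n is a p-integer, i.e., the denominator of B_n/n is not divisible by p. -/
/-!
Faulhaber's formula shows that `S_K / (p^K n) → B_n / n` in `ℚ_[p]`, where
`S_K = ∑_{j < p^K} j^n`. If `(p - 1) ∤ n`, some `g` prime to `p` has `g^n ≢ 1 (mod p)`.
Multiplication by `g` permutes the residues mod `p^K`, and `(g j)^n ≡ (g j mod p^K)^n`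
modulo `p^K · p^{v_p(n)}`, so `p^K · p^{v_p(n)} ∣ (g^n - 1) S_K`, hence `p^K n ∣ S_K`
p-adically. Thus every `S_K / (p^K n)` with `K ≥ v_p(n)` is a p-adic integer, and so is the limit.
-/

open Finset Filter Topology

theorem sum_range_mul_mod_eq {M : Type*} [AddCommMonoid M] (f : ℕ → M) {g N : ℕ}
    (hg : g.Coprime N) : ∑ j ∈ range N, f (g * j % N) = ∑ j ∈ range N, f j := by
  rcases N.eq_zero_or_pos with rfl | hN
  · simp
  have hinj : Function.Injective fun j : Fin N => (⟨g * j % N, Nat.mod_lt _ hN⟩ : Fin N) :=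
    fun a b hab => Fin.ext <| (Nat.ModEq.cancel_left_of_coprime (Nat.coprime_comm.1 hg)
      (Fin.mk.inj_iff.1 hab)).eq_of_lt_of_lt a.2 b.2
  simp only [Finset.sum_range]
  exact Fintype.sum_bijective _ (Finite.injective_iff_bijective.1 hinj) _ _ fun _ => rfl

theorem mul_dvd_pow_sub_pow {R : Type*} [CommRing R] {a b N d : R} {n : ℕ}
    (hab : N ∣ a - b) (hdN : d ∣ N) (hdn : d ∣ n) : N * d ∣ a ^ n - b ^ n := by
  rw [← geom_sum₂_mul, mul_comm N]
  exact mul_dvd_mul ((dvd_geom_sum₂_iff_of_dvd_sub (hdN.trans hab)).2 (hdn.mul_right _)) hab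

theorem mul_dvd_pow_sub_one_mul_sum_range_pow {g N d : ℕ} (n : ℕ) (hg : g.Coprime N)
    (hdN : d ∣ N) (hdn : d ∣ n) :
    (N * d : ℤ) ∣ ((g : ℤ) ^ n - 1) * ∑ j ∈ range N, (j : ℤ) ^ n := by
  have hperm := sum_range_mul_mod_eq (fun j => (j : ℤ) ^ n) hg
  have : ((g : ℤ) ^ n - 1) * ∑ j ∈ range N, (j : ℤ) ^ n =
      ∑ j ∈ range N, (((g * j : ℕ) : ℤ) ^ n - ((g * j % N : ℕ) : ℤ) ^ n) := by
    rw [sum_sub_distrib, hperm, sub_mul, one_mul, mul_sum]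
    simp [mul_pow]
  rw [this]
  refine dvd_sum fun j _ => mul_dvd_pow_sub_pow ?_ (Int.natCast_dvd_natCast.2 hdN)
    (Int.natCast_dvd_natCast.2 hdn)
  exact Nat.modEq_iff_dvd.1 (Nat.mod_modEq _ _)

theorem exists_coprime_not_dvd_pow_sub_one {p n : ℕ} [Fact p.Prime] (hn : ¬ (p - 1) ∣ n) :
    ∃ g : ℕ, g.Coprime p ∧ ¬ (p : ℤ) ∣ (g : ℤ) ^ n - 1 := by
  obtain ⟨u, hu⟩ : ∃ u : (ZMod p)ˣ, u ^ n ≠ 1 := by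
    by_contra! h
    apply hn
    rw [← ZMod.card_units p, ← Nat.card_eq_fintype_card, ← IsCyclic.exponent_eq_card]
    exact Monoid.exponent_dvd_of_forall_pow_eq_one h
  refine ⟨(u : ZMod p).val, ZMod.val_coe_unit_coprime u, fun h => hu (Units.ext ?_)⟩
  rw [← ZMod.intCast_zmod_eq_zero_iff_dvd] at h
  push_cast at h ⊢
  rw [ZMod.natCast_zmod_val] at h
  exact sub_eq_zero.1 h

theorem sum_range_pow_div_eq {n N : ℕ} (hn : n ≠ 0) (hN : N ≠ 0) :
    (∑ k ∈ range N, (k : ℚ) ^ n) / (N * n) = bernoulli n / n +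
      ∑ i ∈ range n, bernoulli i * (n + 1).choose i / (n * (n + 1)) * N ^ (n - i) := by
  rw [sum_range_pow, sum_range_succ, Nat.choose_succ_self_right, Nat.add_sub_cancel_left, add_div,
    sum_div, add_comm]
  congr 1
  · push_cast
    field_simp
  · refine sum_congr rfl fun i hi => ?_
    rw [show n + 1 - i = n - i + 1 by grind, pow_succ]
    field_simp

theorem tendsto_sum_range_pow_div {p : ℕ} [Fact p.Prime] {n : ℕ} (hn : n ≠ 0) :
    Tendsto (fun K => (((∑ k ∈ range (p ^ K), (k : ℚ) ^ n) / (p ^ K * n) : ℚ) : ℚ_[p])) atTop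
      (𝓝 (bernoulli n / n : ℚ)) := by
  have hp := (Fact.out : p.Prime).ne_zero
  set a : ℕ → ℚ := fun i => bernoulli i * (n + 1).choose i / (n * (n + 1))
  have hlim : Tendsto (fun K => ((bernoulli n / n : ℚ) : ℚ_[p]) +
      ∑ i ∈ range n, (a i : ℚ_[p]) * ((p : ℚ_[p]) ^ (n - i)) ^ K) atTop
      (𝓝 (bernoulli n / n : ℚ)) := by
    have hsmall : ∀ i ∈ range n, ‖(p : ℚ_[p]) ^ (n - i)‖ < 1 := fun i hi => by
      rw [norm_pow]
      exact pow_lt_one₀ (norm_nonneg _) Padic.norm_p_lt_one (by grind)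
    simpa using tendsto_const_nhds.add <| tendsto_finsetSum _ fun i hi =>
      (tendsto_pow_atTop_nhds_zero_of_norm_lt_one (hsmall i hi)).const_mul (a i : ℚ_[p])
  refine hlim.congr fun K => ?_
  have := sum_range_pow_div_eq hn (pow_ne_zero K hp)
  push_cast at this
  rw [this]
  push_cast
  simp [a, pow_right_comm]

theorem pow_mul_pow_dvd_sum_range_pow {p n e K : ℕ} [Fact p.Prime] (hn : ¬ (p - 1) ∣ n)
    (he : p ^ e ∣ n) (heK : e ≤ K) :
    (p : ℤ) ^ K * (p : ℤ) ^ e ∣ ∑ j ∈ range (p ^ K), (j : ℤ) ^ n := by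
  obtain ⟨g, hgp, hgn⟩ := exists_coprime_not_dvd_pow_sub_one hn
  have hdvd := mul_dvd_pow_sub_one_mul_sum_range_pow n (hgp.pow_right K) (pow_dvd_pow p heK) he
  push_cast at hdvd
  have hcop : IsCoprime ((p : ℤ) ^ K * (p : ℤ) ^ e) ((g : ℤ) ^ n - 1) := by
    rw [← pow_add]
    exact ((Nat.prime_iff_prime_int.1 Fact.out).coprime_iff_not_dvd.2 hgn).pow_left
  exact hcop.dvd_of_dvd_mul_left hdvd

theorem norm_bernoulli_div_le_one {p n : ℕ} [Fact p.Prime] (hn : ¬ (p - 1) ∣ n) :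
    ‖((bernoulli n / n : ℚ) : ℚ_[p])‖ ≤ 1 := by
  have hp : p.Prime := Fact.out
  have hn0 : n ≠ 0 := by
    rintro rfl
    exact hn (dvd_zero _)
  obtain ⟨e, n', hn', hnpow⟩ := Nat.exists_eq_pow_mul_and_not_dvd hn0 p hp.ne_one
  refine le_of_tendsto (tendsto_sum_range_pow_div hn0).norm ?_
  filter_upwards [eventually_ge_atTop e] with K hK
  have hS : ‖((∑ j ∈ range (p ^ K), (j : ℤ) ^ n : ℤ) : ℚ_[p])‖ ≤ (p : ℝ) ^ (-(K + e : ℕ) : ℤ) :=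
    (Padic.norm_int_le_pow_iff_dvd _ _).2 <| by
      rw [pow_add]
      exact_mod_cast pow_mul_pow_dvd_sum_range_pow hn (hnpow ▸ dvd_mul_right _ _) hK
  have hn_norm : ‖(n : ℚ_[p])‖ = (p : ℝ) ^ (-e : ℤ) := by
    rw [hnpow, Nat.cast_mul, norm_mul, Nat.cast_pow, Padic.norm_p_pow,
      Padic.norm_natCast_eq_one_iff.2 ((hp.coprime_iff_not_dvd).2 hn'), mul_one]
  push_cast at hS ⊢
  rw [norm_div, norm_mul, Padic.norm_p_pow, hn_norm, ← zpow_add₀ (by exact_mod_cast hp.ne_zero)]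
  exact div_le_one_of_le₀ (by simpa [add_comm] using hS) (by positivity)

theorem stmt_1_general (n p : ℕ) (hp : p.Prime)
    (hnd : ¬ (p - 1) ∣ n) : ¬ p ∣ (bernoulli n / n).den := by
  have : Fact p.Prime := ⟨hp⟩
  rw [← Rat.padicValuation_le_one_iff, ← Padic.norm_rat_le_one_iff_padicValuation_le_one]
  exact norm_bernoulli_div_le_one hnd

/-- Adams: if `p - 1 ∤ n` for a prime `p` and even positive `n`, then `B_n / n`
is a `p`-integer, i.e. `p` does not divide the denominator of `B_n / n`. -/
theorem stmt_1 (n p : ℕ) (hn : 0 < n) (hne : Even n) (hp : p.Prime)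
    (hnd : ¬ (p - 1) ∣ n) : ¬ p ∣ (bernoulli n / n).den :=
  stmt_1_general n p hp hnd
end

section
/- Let k \ge 1 and let j be the unique nonnegative integer with p^j \le k < p^{j+1}. Then for all s, t \in \mathbb{Z}_p, |\binom{s}{k} - \binom{t}{k}|_p \le p^j |s-t|_p. -/
/-!
Write `s = t + u`. By Chu–Vandermonde, `binom(t + u, k) - binom(t, k)` is the sum of the products
`binom(t, i) * binom(u, m)` with `i + m = k` and `m ≥ 1`. Here `binom(t, i) ∈ ℤ_p`, and
`m * binom(u, m) = u * binom(u - 1, m - 1)` with `|m|_p ≥ p^{-j}` because `0 < m < p^{j+1}`, so each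
term has norm at most `p^j |u|_p`; the ultrametric inequality bounds the sum.
-/

open Polynomial Finset.HasAntidiagonal

/-- The binomial coefficient polynomial `x ↦ x(x-1)⋯(x-k+1)/k!` evaluated at a
`p`-adic number. -/
noncomputable def padicBinom (p : ℕ) [Fact p.Prime] (k : ℕ) (x : ℚ_[p]) : ℚ_[p] :=
  (descPochhammer ℚ_[p] k).eval x / (k.factorial : ℚ_[p])

lemma descPochhammer_eval_div_factorial {K : Type*} [Field K] [CharZero K] (x : K) (k : ℕ) :
    (descPochhammer K k).eval x / (k.factorial : K) = Ring.choose x k := by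
  rw [Ring.choose_eq_smul, ← descPochhammer_map (algebraMap ℤ K), eval_map, ← aeval_def,
    aeval_eq_smeval, smul_eq_mul, div_eq_inv_mul]

namespace PadicInt

variable {p : ℕ} [Fact p.Prime]

lemma coe_ringChoose (x : ℤ_[p]) (k : ℕ) :
    ((Ring.choose x k : ℤ_[p]) : ℚ_[p]) = Ring.choose (x : ℚ_[p]) k :=
  Ring.map_choose (Coe.ringHom (p := p)) x k

lemma pow_neg_le_norm_natCast {m j : ℕ} (hm : m ≠ 0) (hmj : m < p ^ (j + 1)) :
    (p : ℝ) ^ (-j : ℤ) ≤ ‖(m : ℤ_[p])‖ := by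
  by_contra! h
  rw [norm_lt_pow_iff_norm_le_pow_sub_one, show -(j : ℤ) - 1 = -((j + 1 : ℕ) : ℤ) by push_cast; ring,
    ← Int.cast_natCast, norm_int_le_pow_iff_dvd] at h
  exact absurd (Nat.le_of_dvd (Nat.pos_of_ne_zero hm) (mod_cast h)) (not_le.mpr hmj)

lemma norm_ringChoose_le (u : ℤ_[p]) {m j : ℕ} (hm : m ≠ 0) (hmj : m < p ^ (j + 1)) :
    ‖Ring.choose u m‖ ≤ (p : ℝ) ^ j * ‖u‖ := by
  have absorb : (m : ℤ_[p]) * Ring.choose u m = u * Ring.choose (u - 1) (m - 1) := by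
    simpa [nsmul_eq_mul] using Ring.choose_smul_choose u (Nat.one_le_iff_ne_zero.mpr hm)
  have hm_mul : ‖(m : ℤ_[p])‖ * ‖Ring.choose u m‖ ≤ ‖u‖ := by
    rw [← norm_mul, absorb, norm_mul]
    exact mul_le_of_le_one_right (norm_nonneg u) (norm_le_one _)
  have hp : (0 : ℝ) < (p : ℝ) ^ j := by have := (Fact.out : p.Prime).pos; positivity
  calc ‖Ring.choose u m‖ = (p : ℝ) ^ j * ((p : ℝ) ^ (-j : ℤ) * ‖Ring.choose u m‖) := by
        rw [zpow_neg, zpow_natCast, mul_inv_cancel_left₀ hp.ne']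
    _ ≤ (p : ℝ) ^ j * (‖(m : ℤ_[p])‖ * ‖Ring.choose u m‖) := by
        gcongr
        exact pow_neg_le_norm_natCast hm hmj
    _ ≤ (p : ℝ) ^ j * ‖u‖ := by gcongr

lemma norm_ringChoose_add_sub_le (t u : ℤ_[p]) {k j : ℕ} (hk : k < p ^ (j + 1)) :
    ‖Ring.choose (t + u) k - Ring.choose t k‖ ≤ (p : ℝ) ^ j * ‖u‖ := by
  have hk0 : (k, 0) ∈ antidiagonal k := mem_antidiagonal.mpr (add_zero k)
  rw [Ring.add_choose_eq k (Commute.all t u), ← Finset.add_sum_erase _ _ hk0,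
    Ring.choose_zero_right, mul_one, add_sub_cancel_left]
  refine IsUltrametricDist.norm_sum_le_of_forall_le_of_nonneg (by positivity) fun im him => ?_
  obtain ⟨hne, hmem⟩ := Finset.mem_erase.mp him
  rw [mem_antidiagonal] at hmem
  have hm : im.2 ≠ 0 := fun h => hne (Prod.ext (by omega) h)
  calc ‖Ring.choose t im.1 * Ring.choose u im.2‖ ≤ ‖Ring.choose u im.2‖ := by
        rw [norm_mul]
        exact mul_le_of_le_one_left (norm_nonneg _) (norm_le_one _)
    _ ≤ (p : ℝ) ^ j * ‖u‖ := norm_ringChoose_le u hm (by omega)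

end PadicInt

theorem stmt_5_general (p : ℕ) [Fact p.Prime] (k j : ℕ)
    (h2 : k < p^(j+1)) (s t : ℤ_[p]) :
    ‖padicBinom p k (s : ℚ_[p]) - padicBinom p k (t : ℚ_[p])‖ ≤
      (p : ℝ)^j * ‖(s : ℚ_[p]) - (t : ℚ_[p])‖ := by
  have h := PadicInt.norm_ringChoose_add_sub_le t (s - t) h2
  rw [add_sub_cancel] at h
  simpa only [padicBinom, descPochhammer_eval_div_factorial, ← PadicInt.coe_ringChoose,
    ← PadicInt.coe_sub, ← PadicInt.norm_def] using h

/-- For `k ≥ 1` with `p^j ≤ k < p^{j+1}` and `s, t ∈ ℤ_p`: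
`|binom(s,k) - binom(t,k)|_p ≤ p^j |s - t|_p`. -/
theorem stmt_5 (p : ℕ) [Fact p.Prime] (k j : ℕ) (hk : 1 ≤ k)
    (h1 : p^j ≤ k) (h2 : k < p^(j+1)) (s t : ℤ_[p]) :
    ‖padicBinom p k (s : ℚ_[p]) - padicBinom p k (t : ℚ_[p])‖ ≤
      (p : ℝ)^j * ‖(s : ℚ_[p]) - (t : ℚ_[p])‖ :=
  stmt_5_general p k j h2 s t
end

section
/- Let p be an odd prime and a an integer with 0 < a < p. Then the Teichmüller character satisfies \omega(a) \equiv a^p (mod p^2 \mathbb{Z}_p) and \omega(a) \equiv a^p + p(a^p - a) (mod p^3 \mathbb{Z}_p). -/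
lemma key_int (p : ℕ) (hp : p.Prime) (hodd : Odd p) (a t : ℤ) (ht : (p:ℤ) ∣ t) :
    (p:ℤ)^3 ∣ (a + t)^p - a^p - (p:ℤ) * a^(p-1) * t := by
  have h3 : 3 ≤ p := by
    rcases hp.two_le.lt_or_eq with h | h
    · omega
    · exact absurd h.symm (by rintro rfl; simp [Nat.odd_iff] at hodd)
  have e1 : p - 1 + 1 = p := by omega
  rw [add_pow, Finset.sum_range_succ]
  have hsplit := Finset.sum_range_succ
    (fun k => a ^ k * t ^ (p - k) * (p.choose k : ℤ)) (p - 1)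
  rw [e1] at hsplit
  rw [hsplit]
  have hterm1 : a ^ p * t ^ (p - p) * (p.choose p : ℤ) = a ^ p := by
    simp
  have hterm2 : a ^ (p-1) * t ^ (p - (p-1)) * (p.choose (p-1) : ℤ)
      = (p:ℤ) * a^(p-1) * t := by
    have : p - (p - 1) = 1 := by omega
    have h2 : p.choose (p-1) = p := by
      have := Nat.choose_symm (show 1 ≤ p by omega) (n := p)
      simpa using this
    rw [this, h2]; ring
  rw [hterm1, hterm2]
  have heq : ∀ S : ℤ, S + (p:ℤ) * a^(p-1) * t + a ^ p - a ^ p - (p:ℤ) * a^(p-1) * t = S := by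
    intro S; ring
  rw [heq]
  apply Finset.dvd_sum
  intro k hk
  rw [Finset.mem_range] at hk
  rcases Nat.eq_zero_or_pos k with rfl | hk1
  · -- term is t^p
    have : t ^ p = t ^ 3 * t ^ (p - 3) := by
      rw [← pow_add]; congr 1; omega
    simp only [pow_zero, one_mul, Nat.choose_zero_right, Nat.cast_one, mul_one, Nat.sub_zero]
    rw [this]
    exact Dvd.dvd.mul_right (pow_dvd_pow_of_dvd ht 3) _
  · have hc : (p:ℤ) ∣ (p.choose k : ℤ) :=
      Int.natCast_dvd_natCast.mpr (hp.dvd_choose_self (by omega) (by omega))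
    have htk : (p:ℤ)^2 ∣ t ^ (p - k) := by
      have : t ^ (p - k) = t ^ 2 * t ^ (p - k - 2) := by
        rw [← pow_add]; congr 1; omega
      rw [this]
      exact Dvd.dvd.mul_right (pow_dvd_pow_of_dvd ht 2) _
    have : (p:ℤ)^3 = (p:ℤ)^2 * p := by ring
    rw [this]
    exact mul_dvd_mul (Dvd.dvd.mul_left htk _) hc |>.trans (by rw [mul_assoc])

lemma key_int2 (p : ℕ) (hp : p.Prime) (hodd : Odd p) (a : ℕ)
    (ha0 : 0 < a) (hap : a < p) :
    (p:ℤ)^3 ∣ (a:ℤ)^(p^2) - ((a:ℤ)^p + p*((a:ℤ)^p - a)) := by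
  haveI : Fact p.Prime := ⟨hp⟩
  have hA : True := trivial
  have haz : (a : ZMod p) ≠ 0 := by
    rw [Ne, ZMod.natCast_eq_zero_iff]
    intro h
    have := Nat.le_of_dvd ha0 h
    omega
  have hFl : (p:ℤ) ∣ (a:ℤ)^(p-1) - 1 := by
    have h0 : (((a:ℤ)^(p-1) - 1 : ℤ) : ZMod p) = 0 := by
      push_cast
      rw [ZMod.pow_card_sub_one_eq_one haz]
      ring
    exact (ZMod.intCast_zmod_eq_zero_iff_dvd _ p).mp h0
  have hApA : (a:ℤ)^p - (a:ℤ) = (a:ℤ) * ((a:ℤ)^(p-1) - 1) := by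
    have h1 : (a:ℤ)^p = (a:ℤ) * (a:ℤ)^(p-1) := by
      rw [← pow_succ']
      congr 1
      omega
    rw [h1]; ring
  have ht : (p:ℤ) ∣ (a:ℤ)^p - (a:ℤ) := by
    rw [hApA]; exact Dvd.dvd.mul_left hFl (a:ℤ)
  have hkey := key_int p hp hodd (a:ℤ) ((a:ℤ)^p - (a:ℤ)) ht
  have hb : (a:ℤ) + ((a:ℤ)^p - (a:ℤ)) = (a:ℤ)^p := by ring
  rw [hb] at hkey
  have hpow : ((a:ℤ)^p)^p = (a:ℤ)^(p^2) := by rw [← pow_mul, sq]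
  rw [hpow] at hkey
  have hrest : (p:ℤ)^3 ∣ (p:ℤ) * (a:ℤ)^(p-1) * ((a:ℤ)^p - (a:ℤ)) - (p:ℤ)*((a:ℤ)^p - (a:ℤ)) := by
    obtain ⟨u, hu⟩ := hFl
    have hu' : (a:ℤ)^(p-1) = (p:ℤ)*u + 1 := by linarith
    have : (p:ℤ) * (a:ℤ)^(p-1) * ((a:ℤ)^p - (a:ℤ)) - (p:ℤ)*((a:ℤ)^p - (a:ℤ))
        = (p:ℤ)^3 * (u^2 * (a:ℤ)) := by
      rw [hApA, hu']; ring
    rw [this]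
    exact Dvd.intro _ rfl
  have heq : (a:ℤ)^(p^2) - ((a:ℤ)^p + (p:ℤ)*((a:ℤ)^p - (a:ℤ)))
      = ((a:ℤ)^(p^2) - (a:ℤ)^p - (p:ℤ)*(a:ℤ)^(p-1)*((a:ℤ)^p-(a:ℤ)))
        + ((p:ℤ)*(a:ℤ)^(p-1)*((a:ℤ)^p-(a:ℤ)) - (p:ℤ)*((a:ℤ)^p-(a:ℤ))) := by ring
  rw [heq]
  exact dvd_add hkey hrest

/-- For an odd prime `p` and `0 < a < p`, the Teichmüller lift `ω(a)`
(the unique `(p-1)`-th root of unity in `ℤ_p` congruent to `a` mod `p`)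
satisfies `ω(a) ≡ a^p (mod p²ℤ_p)` and `ω(a) ≡ a^p + p(a^p - a) (mod p³ℤ_p)`. -/
theorem stmt_7 (p : ℕ) [Fact p.Prime] (hodd : Odd p) (a : ℕ)
    (ha0 : 0 < a) (hap : a < p) (w : ℤ_[p])
    (hroot : w^(p - 1) = 1) (hcong : (p : ℤ_[p]) ∣ (w - a)) :
    ((p : ℤ_[p])^2 ∣ (w - (a : ℤ_[p])^p)) ∧
    ((p : ℤ_[p])^3 ∣ (w - ((a : ℤ_[p])^p + p * ((a : ℤ_[p])^p - a)))) := by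
  have hp := Fact.out (p := p.Prime)
  have hwp : w ^ p = w := by
    have h1 : w ^ p = w ^ (p - 1) * w := by
      rw [← pow_succ]
      congr 1
      have := hp.two_le
      omega
    rw [h1, hroot, one_mul]
  constructor
  · have h := dvd_sub_pow_of_dvd_sub (R := ℤ_[p]) hcong 1
    simpa [pow_one, hwp] using h
  · have h := dvd_sub_pow_of_dvd_sub (R := ℤ_[p]) hcong 2
    have hw2 : w ^ (p ^ 2) = w := by rw [sq, pow_mul, hwp, hwp]
    rw [hw2] at h
    have hint := key_int2 p hp hodd a ha0 hap
    have hcast : (p : ℤ_[p])^3 ∣ ((a:ℤ_[p])^(p^2) - ((a:ℤ_[p])^p + p*((a:ℤ_[p])^p - a))) := by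
      have h2 := map_dvd (Int.castRingHom ℤ_[p]) hint
      simp only [Int.coe_castRingHom] at h2
      push_cast at h2
      exact h2
    have heq : w - ((a : ℤ_[p])^p + p * ((a : ℤ_[p])^p - a))
        = (w - (a:ℤ_[p])^(p^2)) + ((a:ℤ_[p])^(p^2) - ((a:ℤ_[p])^p + p*((a:ℤ_[p])^p - a))) := by
      ring
    rw [heq]
    exact dvd_add h hcast
end

section
/- Let (p,l) be an irregular pair (p an odd prime dividing the numerator of B_l, l even, 2 \le l \le p-3), and let n be a positive integer with n \equiv l (mod p-1). Then B_n/n \equiv S_n(p)/(n p) (mod p^2), where S_n(m) = \sum_{\nu=0}^{m-1} \nu^n. -/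
/-!
Faulhaber's formula for `S_n(p)` turns `B_n/n - S_n(p)/(n p)` into
`-∑_{i<n} B_i (n-1 choose i) p^(n-i) / ((n-i)(n-i+1))`. By von Staudt–Clausen, `p B_i` is
always `p`-integral and `B_{n-2}` is `p`-integral because `p - 1 ∤ n - 2`. The term `i = n-1`
vanishes (`B_{n-1} = 0`, `n` being even), the term `i = n-2` is `p^2/6` times a `p`-integral
number, and for `j = n - i ≥ 3` the valuation of `j(j+1)` is at most `j - 3` when `p ≥ 5`,
so every term is divisible by `p^2`.
-/

open Finset

theorem Nat.choose_mul_add_one_mul_add_two (m i : ℕ) :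
    m.choose i * ((m + 1) * (m + 2)) = (m + 2).choose i * ((m + 1 - i) * (m + 2 - i)) := by
  have h₁ := Nat.choose_mul_succ_eq m i
  have h₂ := Nat.choose_mul_succ_eq (m + 1) i
  calc m.choose i * ((m + 1) * (m + 2)) = m.choose i * (m + 1) * (m + 2) := by ring
    _ = (m + 1).choose i * (m + 2) * (m + 1 - i) := by rw [h₁]; ring
    _ = _ := by rw [h₂]; ring

lemma bernoulli_div_sub_sum_pow_div {n p : ℕ} (hn : n ≠ 0) (hp : p ≠ 0) :
    bernoulli n / n - (∑ ν ∈ range p, (ν : ℚ) ^ n) / (n * p) =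
      -∑ i ∈ range n, bernoulli i * (n - 1).choose i * (p : ℚ) ^ (n - i) /
        ((n - i) * (n - i + 1) : ℕ) := by
  obtain ⟨m, rfl⟩ := Nat.exists_eq_add_one_of_ne_zero hn
  have hp' : (p : ℚ) ≠ 0 := by exact_mod_cast hp
  have hterm : ∀ i ∈ range (m + 1),
      bernoulli i * (m + 1 + 1).choose i * (p : ℚ) ^ (m + 1 + 1 - i) / ((m + 1 : ℕ) + 1) /
          ((m + 1 : ℕ) * p) =
        bernoulli i * (m + 1 - 1).choose i * (p : ℚ) ^ (m + 1 - i) /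
          ((m + 1 - i) * (m + 1 - i + 1) : ℕ) := by
    intro i hi
    obtain ⟨k, rfl⟩ := Nat.exists_eq_add_of_le (Nat.lt_succ_iff.mp (mem_range.mp hi))
    have key := Nat.choose_mul_add_one_mul_add_two (i + k) i
    simp only [show i + k + 1 - i = k + 1 by omega, show i + k + 2 - i = k + 2 by omega,
      show i + k + 1 + 1 = i + k + 2 from rfl, Nat.add_sub_cancel] at key ⊢
    have key' : ((i + k).choose i : ℚ) * ((i + k + 1) * (i + k + 2)) =
        (i + k + 2).choose i * ((k + 1) * (k + 2)) := by exact_mod_cast key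
    push_cast
    rw [pow_succ]
    field_simp
    linear_combination -bernoulli i * key'
  rw [sum_range_pow, sum_range_succ, add_div, sum_div, sum_congr rfl hterm]
  simp only [Nat.choose_succ_self_right, show m + 1 + 1 - (m + 1) = 1 by omega]
  push_cast
  field_simp
  ring

lemma padicNorm_bernoulli_le_of_odd (p : ℕ) {k : ℕ} (hk : Odd k) :
    padicNorm p (bernoulli k) ≤ padicNorm p (1 / 2) := by
  rcases eq_or_ne k 1 with rfl | hk1
  · rw [bernoulli_one, neg_div, padicNorm.neg]
  · rw [bernoulli_eq_zero_of_odd hk (lt_of_le_of_ne hk.pos hk1.symm), padicNorm.zero]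
    exact padicNorm.nonneg _

section PadicBounds

variable {p : ℕ} [Fact p.Prime]

lemma padicNorm_one_div_prime {q : ℕ} (hq : q.Prime) :
    padicNorm p (1 / q) = if q = p then (p : ℚ) else 1 := by
  rw [padicNorm.div, padicNorm.one]
  split_ifs with h
  · rw [h, padicNorm.padicNorm_p_of_prime, one_div, inv_inv]
  · rw [(padicNorm.nat_eq_one_iff q).mpr, div_one]
    exact fun hpq => h ((Nat.prime_dvd_prime_iff_eq Fact.out hq).mp hpq).symm

lemma padicNorm_bernoulli_two_mul_le {k : ℕ} {t : ℚ} (ht : 1 ≤ t)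
    (h : ∀ q : ℕ, q.Prime → q - 1 ∣ 2 * k → padicNorm p (1 / q) ≤ t) :
    padicNorm p (bernoulli (2 * k)) ≤ t := by
  obtain ⟨z, hz⟩ := Bernoulli.vonStaudt_clausen k
  rw [eq_sub_of_add_eq hz.symm]
  refine padicNorm.sub.trans (max_le ((padicNorm.of_int z).trans ht) ?_)
  refine padicNorm.sum_le' (fun q hq => ?_) (zero_le_one.trans ht)
  obtain ⟨-, hq, hdvd⟩ := mem_filter.mp hq
  exact h q hq hdvd

theorem padicNorm_bernoulli_le (k : ℕ) : padicNorm p (bernoulli k) ≤ p := by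
  have hp : (1 : ℚ) ≤ p := by exact_mod_cast (Fact.out : p.Prime).one_le
  have hinv (q : ℕ) (hq : q.Prime) : padicNorm p (1 / q) ≤ p := by
    rw [padicNorm_one_div_prime hq]
    split_ifs <;> simp [hp]
  obtain ⟨m, rfl | rfl⟩ := Nat.even_or_odd' k
  · exact padicNorm_bernoulli_two_mul_le hp fun q hq _ => hinv q hq
  · exact (padicNorm_bernoulli_le_of_odd p (odd_two_mul_add_one m)).trans
      (by exact_mod_cast hinv 2 Nat.prime_two)

theorem padicNorm_bernoulli_le_one {k : ℕ} (hk : ¬ p - 1 ∣ k) :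
    padicNorm p (bernoulli k) ≤ 1 := by
  obtain ⟨m, rfl | rfl⟩ := Nat.even_or_odd' k
  · refine padicNorm_bernoulli_two_mul_le le_rfl fun q hq hdvd => ?_
    rw [padicNorm_one_div_prime hq, if_neg]
    rintro rfl
    exact hk hdvd
  · have hp2 : 2 ≠ p := by
      rintro rfl
      exact hk (one_dvd _)
    refine (padicNorm_bernoulli_le_of_odd p (odd_two_mul_add_one m)).trans ?_
    rw [show (2 : ℚ) = (2 : ℕ) by norm_num, padicNorm_one_div_prime Nat.prime_two, if_neg hp2]

lemma padicValNat_mul_add_one_add_three_le (hp : 5 ≤ p) {j : ℕ} (hj : 3 ≤ j) :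
    padicValNat p (j * (j + 1)) + 3 ≤ j := by
  set v := padicValNat p (j * (j + 1))
  rcases Nat.eq_zero_or_pos v with hv | hv
  · omega
  have hdvd : p ^ v ∣ j ∨ p ^ v ∣ j + 1 :=
    (Nat.coprime_self_add_right.mpr (Nat.coprime_one_right j)).isPrimePow_dvd_mul
      ((Nat.Prime.isPrimePow Fact.out).pow hv.ne') |>.mp pow_padicValNat_dvd
  have hle : p ^ v ≤ j + 1 := by
    rcases hdvd with h | h
    · exact (Nat.le_of_dvd (by omega) h).trans j.le_succ
    · exact Nat.le_of_dvd j.succ_pos h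
  have hbern : 1 + v * 4 ≤ 5 ^ v :=
    one_add_mul_le_pow_of_sq_nonneg (by positivity) (by positivity) (by positivity) v
  have := Nat.pow_le_pow_left hp v
  omega

lemma padicNorm_prime_pow_div (j : ℕ) {d : ℕ} (hd : d ≠ 0) :
    padicNorm p ((p : ℚ) ^ j / d) = (p : ℚ) ^ ((padicValNat p d : ℤ) - j) := by
  have hp : (p : ℚ) ≠ 0 := by exact_mod_cast (Fact.out : p.Prime).ne_zero
  rw [padicNorm.div, IsAbsoluteValue.abv_pow (padicNorm p), padicNorm.padicNorm_p_of_prime,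
    padicNorm.eq_zpow_of_nonzero (by exact_mod_cast hd), padicValRat.of_nat, zpow_sub₀ hp,
    zpow_neg, zpow_natCast, zpow_natCast, inv_pow]
  field_simp

lemma padicNorm_mul_natCast_mul_prime_pow_div_le {x : ℚ} {e : ℤ} (hx : padicNorm p x ≤ p ^ e)
    (c j : ℕ) {d : ℕ} (hd : d ≠ 0) :
    padicNorm p (x * c * p ^ j / d) ≤ (p : ℚ) ^ (e + padicValNat p d - j) := by
  have hp : (p : ℚ) ≠ 0 := by exact_mod_cast (Fact.out : p.Prime).ne_zero
  rw [mul_div_assoc, padicNorm.mul, padicNorm.mul, padicNorm_prime_pow_div j hd, add_sub_assoc,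
    zpow_add₀ hp]
  gcongr
  simpa using mul_le_mul hx (padicNorm.of_nat c) (padicNorm.nonneg _) (by positivity)

lemma pow_dvd_num_of_padicNorm_le {q : ℚ} {e : ℕ} (h : padicNorm p q ≤ (p : ℚ) ^ (-e : ℤ)) :
    (p : ℤ) ^ e ∣ q.num := by
  have hnum : padicNorm p q.num ≤ padicNorm p q := by
    rw [← Rat.mul_den_eq_num, padicNorm.mul]
    exact mul_le_of_le_one_right (padicNorm.nonneg _) (padicNorm.of_nat _)
  exact_mod_cast padicNorm.dvd_iff_norm_le.mpr (hnum.trans h)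

theorem padicNorm_bernoulli_div_sub_sum_pow_div_le (hp : 5 ≤ p) {n : ℕ} (hn : 4 ≤ n)
    (hne : Even n) (hnd : ¬ p - 1 ∣ n - 2) :
    padicNorm p (bernoulli n / n - (∑ ν ∈ range p, (ν : ℚ) ^ n) / (n * p)) ≤
      (p : ℚ) ^ (-2 : ℤ) := by
  have hp1 : (1 : ℚ) ≤ p := by exact_mod_cast (Fact.out : p.Prime).one_le
  rw [bernoulli_div_sub_sum_pow_div (by omega) (Fact.out : p.Prime).ne_zero, padicNorm.neg]
  refine padicNorm.sum_le' (fun i hi => ?_) (by positivity)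
  have hi : i < n := mem_range.mp hi
  obtain rfl | rfl | hi3 : i = n - 1 ∨ i = n - 2 ∨ i + 3 ≤ n := by omega
  · rw [bernoulli_eq_zero_of_odd (Nat.Even.sub_odd (by omega) hne odd_one) (by omega)]
    simp
  · have h6 : padicValNat p (2 * 3) = 0 := padicValNat.eq_zero_of_not_dvd fun h => by
      rcases (Nat.Prime.dvd_mul Fact.out).mp h with h | h <;>
        · have := Nat.le_of_dvd (by norm_num) h
          omega
    have hB : padicNorm p (bernoulli (n - 2)) ≤ (p : ℚ) ^ (0 : ℤ) := by
      simpa using padicNorm_bernoulli_le_one hnd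
    refine (padicNorm_mul_natCast_mul_prime_pow_div_le hB _ _
      (mul_ne_zero (by omega) (by omega))).trans_eq ?_
    rw [show n - (n - 2) = 2 by omega, h6]
    norm_num
  · have hB : padicNorm p (bernoulli i) ≤ (p : ℚ) ^ (1 : ℤ) := by
      simpa using padicNorm_bernoulli_le i
    refine (padicNorm_mul_natCast_mul_prime_pow_div_le hB _ _
      (mul_ne_zero (by omega) (by omega))).trans ?_
    have := padicValNat_mul_add_one_add_three_le hp (j := n - i) (by omega)
    exact zpow_le_zpow_right₀ hp1 (by omega)

end PadicBounds

theorem stmt_9_general (p l n : ℕ) (hp : p.Prime) (hodd : Odd p)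
    (hl2 : 2 ≤ l) (hlp : l ≤ p - 3) (hle : Even l)
    (hirr : (p : ℤ) ∣ (bernoulli l).num)
    (hcong : n ≡ l [MOD p - 1]) :
    ((p : ℤ)^2) ∣
      (bernoulli n / n - (∑ ν ∈ Finset.range p, (ν : ℚ)^n) / (n * p)).num := by
  have : Fact p.Prime := ⟨hp⟩
  have hl4 : 4 ≤ l := by
    have hl : l ≠ 2 := by
      rintro rfl
      rw [bernoulli_two] at hirr
      norm_num at hirr
      exact hp.not_dvd_one (by exact_mod_cast hirr)
    obtain ⟨r, rfl⟩ := hle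
    omega
  have hmod : n % (p - 1) = l := by
    rw [← Nat.mod_eq_of_lt (show l < p - 1 by omega)]
    exact hcong
  have hln : l ≤ n := hmod ▸ Nat.mod_le n (p - 1)
  have hdiv : n = (p - 1) * (n / (p - 1)) + l := by rw [← hmod, Nat.div_add_mod]
  have hne : Even n := by
    rw [hdiv]
    exact ((Nat.Odd.sub_odd hodd odd_one).mul_right _).add hle
  have hnd : ¬ p - 1 ∣ n - 2 := fun h => by
    rw [hdiv, Nat.add_sub_assoc hl2, Nat.dvd_add_right (dvd_mul_right _ _)] at h
    have := Nat.le_of_dvd (by omega) h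
    omega
  exact pow_dvd_num_of_padicNorm_le
    (padicNorm_bernoulli_div_sub_sum_pow_div_le (by omega) (by omega) hne hnd)

/-- For an irregular pair `(p, l)` and `n ≡ l (mod p-1)`, `n > 0`:
`B_n/n ≡ S_n(p)/(n p) (mod p²)`, where `S_n(m) = ∑_{ν<m} ν^n`. -/
theorem stmt_9 (p l n : ℕ) (hp : p.Prime) (hodd : Odd p)
    (hl2 : 2 ≤ l) (hlp : l ≤ p - 3) (hle : Even l)
    (hirr : (p : ℤ) ∣ (bernoulli l).num)
    (hn : 0 < n) (hcong : n ≡ l [MOD p - 1]) :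
    ((p : ℤ)^2) ∣
      (bernoulli n / n - (∑ ν ∈ Finset.range p, (ν : ℚ)^n) / (n * p)).num :=
  stmt_9_general p l n hp hodd hl2 hlp hle hirr hcong
end
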